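/- Lower decomposition of the log-consistency: for every possibility function g ∈ F(Θ), CBO_low(g) = log Z_max − D_max(g ‖ g*_max), where the subtraction is taken in the extended reals (with real minus +∞ equal to −∞). -/

import Mathlib

open scoped ENNReal

/-- A possibility function on `Θ`: valued in `[0,1]` with supremum `1`. -/
def IsPossibility {Θ : Type*} (f : Θ → ℝ) : Prop :=
  (∀ θ, 0 ≤ f θ) ∧ (∀ θ, f θ ≤ 1) ∧ (⨆ θ, f θ) = 1

/-- Extended logarithm of the quotient `g θ / π θ`, computed in `[0,∞]` with the
conventions `0/0 = 0` and `a/0 = ∞` for `a > 0`, and `log 0 = -∞`, `log ∞ = ∞`. -/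
noncomputable def ratioLog {Θ : Type*} (g π : Θ → ℝ) (θ : Θ) : EReal :=
  ENNReal.log (ENNReal.ofReal (g θ) / ENNReal.ofReal (π θ))

/-- The lower consistency bound `CBO_low(g) = inf_θ { -ℓ(θ) - log(g(θ)/π(θ)) }`. -/
noncomputable def CBOlow {Θ : Type*} (ℓ π g : Θ → ℝ) : EReal :=
  ⨅ θ, ((-ℓ θ : ℝ) : EReal) - ratioLog g π θ

/-- The upper consistency bound `CBO_up(g) = sup_θ { -ℓ(θ) - log(g(θ)/π(θ)) }`. -/
noncomputable def CBOup {Θ : Type*} (ℓ π g : Θ → ℝ) : EReal :=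
  ⨆ θ, ((-ℓ θ : ℝ) : EReal) - ratioLog g π θ

/-- The maxitive marginal likelihood `Z_max = sup_θ exp(-ℓ(θ)) π(θ)`. -/
noncomputable def Zmax {Θ : Type*} (ℓ π : Θ → ℝ) : ℝ :=
  ⨆ θ, Real.exp (-ℓ θ) * π θ

/-- The maxitive posterior `g*_max(θ) = exp(-ℓ(θ)) π(θ) / Z_max`. -/
noncomputable def gstar {Θ : Type*} (ℓ π : Θ → ℝ) (θ : Θ) : ℝ :=
  Real.exp (-ℓ θ) * π θ / Zmax ℓ π

/-- The max-relative entropy `D_max(g ‖ f) = sup_θ log(g(θ)/f(θ))`. -/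
noncomputable def Dmax {Θ : Type*} (g f : Θ → ℝ) : EReal :=
  ⨆ θ, ratioLog g f θ

/-!
Pointwise `g*_max = π · e^{-ℓ} / Z_max`, so `log (g / g*_max) = log (g / π) + ℓ + log Z_max`,
and this survives the degenerate quotients `0` and `∞`. Hence each term `-ℓ - log (g / π)` of
the infimum equals `log Z_max - log (g / g*_max)`, and `x ↦ c - x` is an order-reversing
involution of `EReal` for real `c`, which turns the infimum of `c - ·` into `c -` the supremum.
-/

namespace EReal

theorem coe_sub_coe_sub_self (c : ℝ) (x : EReal) : (c : EReal) - (c - x) = x := by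
  induction x using EReal.rec with
  | bot => rw [coe_sub_bot, sub_top]
  | coe x => norm_cast; ring
  | top => rw [sub_top, coe_sub_bot]

theorem coe_sub_sub_coe_sub (a b : ℝ) (x : EReal) :
    (b : EReal) - (x - ((a - b : ℝ) : EReal)) = a - x := by
  induction x using EReal.rec with
  | bot => rw [bot_sub, coe_sub_bot, coe_sub_bot]
  | coe x => norm_cast; ring
  | top => rw [top_sub_coe, sub_top, sub_top]

theorem iInf_coe_sub {ι : Sort*} (c : ℝ) (f : ι → EReal) :
    ⨅ i, (c : EReal) - f i = c - ⨆ i, f i := by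
  refine le_antisymm ?_ (le_iInf fun i => sub_le_sub le_rfl (le_iSup f i))
  set m := ⨅ i, (c : EReal) - f i
  have hsup : ⨆ i, f i ≤ c - m := iSup_le fun i =>
    coe_sub_coe_sub_self c (f i) ▸ sub_le_sub le_rfl (iInf_le _ i)
  calc m = c - (c - m) := (coe_sub_coe_sub_self c m).symm
    _ ≤ c - ⨆ i, f i := sub_le_sub le_rfl hsup

end EReal

theorem ratioLog_eq_sub_log_of_eq_mul {Θ : Type*} {g f h : Θ → ℝ} {θ : Θ} {c : ℝ}
    (hh : h θ = f θ * c) (hc : 0 < c) :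
    ratioLog g h θ = ratioLog g f θ - Real.log c := by
  rw [ratioLog, ratioLog, hh, ENNReal.ofReal_mul' hc.le, div_eq_mul_inv _ (_ * _),
    ENNReal.mul_inv (.inr ENNReal.ofReal_ne_top) (.inr (ENNReal.ofReal_pos.2 hc).ne'),
    ← mul_assoc, ← div_eq_mul_inv (ENNReal.ofReal (g θ)), ENNReal.log_mul_add, ENNReal.log_inv,
    ENNReal.log_ofReal_of_pos hc]
  rfl

theorem Zmax_pos {Θ : Type*} {ℓ π : Θ → ℝ} (hπ : IsPossibility π) (hℓ : ∀ θ, 0 ≤ ℓ θ) :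
    0 < Zmax ℓ π := by
  obtain ⟨hπ0, hπ1, hπsup⟩ := hπ
  obtain ⟨θ, hθ⟩ : ∃ θ, 0 < π θ := by
    by_contra! h
    exact absurd (hπsup ▸ Real.iSup_nonpos h) (by norm_num)
  have hbdd : BddAbove (Set.range fun θ => Real.exp (-ℓ θ) * π θ) := ⟨1, by
    rintro _ ⟨θ, rfl⟩
    exact mul_le_one₀ (Real.exp_le_one_iff.2 (neg_nonpos.2 (hℓ θ))) (hπ0 θ) (hπ1 θ)⟩
  exact (mul_pos (Real.exp_pos _) hθ).trans_le (le_ciSup hbdd θ)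

theorem gstar_eq_mul {Θ : Type*} (ℓ π : Θ → ℝ) (θ : Θ) :
    gstar ℓ π θ = π θ * (Real.exp (-ℓ θ) / Zmax ℓ π) := by
  rw [gstar, mul_comm, mul_div_assoc]

theorem CBOlow_decomposition_general {Θ : Type*} (π ℓ g : Θ → ℝ)
    (hπ : IsPossibility π) (hℓ : ∀ θ, 0 ≤ ℓ θ) :
    CBOlow ℓ π g = ((Real.log (Zmax ℓ π) : ℝ) : EReal) - Dmax g (gstar ℓ π) := by
  have hZ := Zmax_pos hπ hℓ
  have hterm : ∀ θ, ((-ℓ θ : ℝ) : EReal) - ratioLog g π θ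
      = ((Real.log (Zmax ℓ π) : ℝ) : EReal) - ratioLog g (gstar ℓ π) θ := fun θ => by
    rw [ratioLog_eq_sub_log_of_eq_mul (gstar_eq_mul ℓ π θ) (div_pos (Real.exp_pos _) hZ),
      Real.log_div (Real.exp_pos _).ne' hZ.ne', Real.log_exp, EReal.coe_sub_sub_coe_sub]
  simp only [CBOlow, Dmax, hterm, EReal.iInf_coe_sub]

/-- Lower decomposition of the log-consistency:
`CBO_low(g) = log Z_max − D_max(g ‖ g*_max)` for every possibility function `g`,
the subtraction being taken in the extended reals. -/
theorem CBOlow_decomposition {Θ : Type*} [Nonempty Θ] (π ℓ g : Θ → ℝ)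
    (hπ : IsPossibility π) (hℓ : ∀ θ, 0 ≤ ℓ θ) (hg : IsPossibility g) :
    CBOlow ℓ π g = ((Real.log (Zmax ℓ π) : ℝ) : EReal) - Dmax g (gstar ℓ π) :=
  CBOlow_decomposition_general π ℓ g hπ hℓ
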